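/- Let g and the Euclidean metric g_euc be Riemannian metrics on an open set U ⊆ ℝ³ with |g_{ij} - δ_{ij}|_{C¹(U)} < C₂ and |g^{ij} - δ_{ij}|_{C⁰(U)} < C₂ for all 1 ≤ i,j ≤ 3. Let S ⊆ U be an immersed C² surface without boundary whose second fundamental form Ā with respect to g satisfies |Ā| < C₁ on S. Then there is a constant C₃ > 0 depending only on C₁ and C₂ (not on S) such that the second fundamental form A of S with respect to g_euc satisfies |A| < C₃ on S. -/

import Mathlib

open scoped BigOperators

/-- Partial derivative in the `i`-th coordinate direction. -/
noncomputable def pderiv3 (i : Fin 3) (f : (Fin 3 → ℝ) → ℝ) (x : Fin 3 → ℝ) : ℝ :=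
  fderiv ℝ f x (Pi.single i 1)

/-- The Christoffel symbols `Γ^k_{ij}` of a metric `g` on (an open set of)
`ℝ³`, in Euclidean coordinates. -/
noncomputable def christoffel (g : (Fin 3 → ℝ) → Matrix (Fin 3) (Fin 3) ℝ)
    (x : Fin 3 → ℝ) (k i j : Fin 3) : ℝ :=
  (1 / 2) * ∑ l : Fin 3, (g x)⁻¹ k l *
    (pderiv3 i (fun y => g y j l) x + pderiv3 j (fun y => g y i l) x
      - pderiv3 l (fun y => g y i j) x)

/-- The inner product of two vectors with respect to the metric `g` at `x`. -/
def ginner (g : (Fin 3 → ℝ) → Matrix (Fin 3) (Fin 3) ℝ)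
    (x v w : Fin 3 → ℝ) : ℝ :=
  ∑ i : Fin 3, ∑ j : Fin 3, g x i j * v i * w j

/-- The `i`-th coordinate tangent vector of a parametrized surface
`X : ℝ² → ℝ³`. -/
noncomputable def tangentVec (X : (Fin 2 → ℝ) → Fin 3 → ℝ) (i : Fin 2)
    (u : Fin 2 → ℝ) : Fin 3 → ℝ :=
  fun k => fderiv ℝ (fun v => X v k) u (Pi.single i 1)

/-- The vector `∂²X/∂uᵢ∂uⱼ + Γ(X)(∂ᵢX, ∂ⱼX)` whose `g`-normal component is the
second fundamental form of the immersion `X` with respect to the metric `g`. -/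
noncomputable def sffVec (g : (Fin 3 → ℝ) → Matrix (Fin 3) (Fin 3) ℝ)
    (X : (Fin 2 → ℝ) → Fin 3 → ℝ) (i j : Fin 2) (u : Fin 2 → ℝ) :
    Fin 3 → ℝ :=
  fun k => fderiv ℝ (fun v => tangentVec X i v k) u (Pi.single j 1)
    + ∑ a : Fin 3, ∑ b : Fin 3,
        christoffel g (X u) k a b * tangentVec X i u a * tangentVec X j u b

/-- The second fundamental form `II_{ij}` of `X` with respect to the metric `g`
and the `g`-unit normal field `n`. -/
noncomputable def sff (g : (Fin 3 → ℝ) → Matrix (Fin 3) (Fin 3) ℝ)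
    (X : (Fin 2 → ℝ) → Fin 3 → ℝ) (n : (Fin 2 → ℝ) → Fin 3 → ℝ)
    (i j : Fin 2) (u : Fin 2 → ℝ) : ℝ :=
  ginner g (X u) (sffVec g X i j u) (n u)

/-- The first fundamental form `I_{ij}` of `X` with respect to `g`. -/
noncomputable def fff (g : (Fin 3 → ℝ) → Matrix (Fin 3) (Fin 3) ℝ)
    (X : (Fin 2 → ℝ) → Fin 3 → ℝ) (i j : Fin 2) (u : Fin 2 → ℝ) : ℝ :=
  ginner g (X u) (tangentVec X i u) (tangentVec X j u)

/-- The Euclidean metric on `ℝ³` (the identity matrix at every point). -/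
def euclMetric : (Fin 3 → ℝ) → Matrix (Fin 3) (Fin 3) ℝ := fun _ => 1

/-!
Fix `u` and a direction `v`, let `w = dX(v)` and `W = ∂²X(v, v) + Γ(w, w)`. Since `∂₁X, ∂₂X` and
the `g`-unit normal `ν` form a basis, the Euclidean normal component of `W` is its `g`-normal
component `II_g(v, v)` times `⟨ν, N⟩`. The first factor is at most `C₁ (1 + 3C₂) |w|²` by the
`C⁰` bound on `g`; the second is at most `|ν|`, and Cauchy–Schwarz for `g` gives
`|ν|⁴ ≤ g(ν, ν) · νᵀ g⁻¹ ν ≤ (1 + 3C₂) |ν|²`. The Euclidean second fundamental form differs from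
`W ⬝ N` by `Γ(w, w) ⬝ N`, which the `C¹` bounds control through the Christoffel symbols.
-/

open Matrix Finset

section QuadraticForms

variable {ι : Type*} [Fintype ι]

theorem abs_dotProduct_mulVec_self_le {E : Matrix ι ι ℝ} {c : ℝ} (hE : ∀ i j, |E i j| ≤ c)
    (z : ι → ℝ) : |z ⬝ᵥ E *ᵥ z| ≤ Fintype.card ι * c * (z ⬝ᵥ z) := by
  rcases isEmpty_or_nonempty ι with hι | ⟨⟨i₀⟩⟩
  · simp [dotProduct]
  have hc : 0 ≤ c := (abs_nonneg _).trans (hE i₀ i₀)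
  calc |z ⬝ᵥ E *ᵥ z| ≤ ∑ i, ∑ j, c * (|z i| * |z j|) := by
        simp only [dotProduct, mulVec, mul_sum]
        refine (abs_sum_le_sum_abs _ _).trans (sum_le_sum fun i _ =>
          (abs_sum_le_sum_abs _ _).trans (sum_le_sum fun j _ => ?_))
        rw [abs_mul, abs_mul, mul_left_comm]
        exact mul_le_mul_of_nonneg_right (hE i j) (by positivity)
    _ = c * (∑ i, |z i|) ^ 2 := by rw [sq, sum_mul_sum, mul_sum]; simp only [mul_sum]
    _ ≤ c * (Fintype.card ι * ∑ i, |z i| ^ 2) :=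
        mul_le_mul_of_nonneg_left sq_sum_le_card_mul_sum_sq hc
    _ = Fintype.card ι * c * (z ⬝ᵥ z) := by
        simp only [sq_abs]; simp only [dotProduct, sq]; ring

theorem dotProduct_mulVec_self_le [DecidableEq ι] {M : Matrix ι ι ℝ} {c : ℝ}
    (hM : ∀ i j, |M i j - (1 : Matrix ι ι ℝ) i j| ≤ c) (z : ι → ℝ) :
    z ⬝ᵥ M *ᵥ z ≤ (1 + Fintype.card ι * c) * (z ⬝ᵥ z) := by
  have hsplit : z ⬝ᵥ M *ᵥ z = z ⬝ᵥ z + z ⬝ᵥ (M - 1) *ᵥ z := by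
    rw [sub_mulVec, one_mulVec, dotProduct_sub]; ring
  have := abs_dotProduct_mulVec_self_le (E := M - 1) hM z
  rw [hsplit]
  linarith [le_abs_self (z ⬝ᵥ (M - 1) *ᵥ z)]

theorem Matrix.IsSymm.dotProduct_mulVec_comm {G : Matrix ι ι ℝ} (hG : G.IsSymm)
    (x y : ι → ℝ) : y ⬝ᵥ G *ᵥ x = x ⬝ᵥ G *ᵥ y := by
  rw [dotProduct_mulVec, ← mulVec_transpose, dotProduct_comm, hG.eq]

theorem Matrix.PosSemidef.sq_dotProduct_mulVec_le {G : Matrix ι ι ℝ} (hG : G.PosSemidef)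
    (x y : ι → ℝ) : (x ⬝ᵥ G *ᵥ y) ^ 2 ≤ (x ⬝ᵥ G *ᵥ x) * (y ⬝ᵥ G *ᵥ y) := by
  have hsymm := (isHermitian_iff_isSymm.mp hG.isHermitian).dotProduct_mulVec_comm x y
  have hquad : ∀ s : ℝ,
      0 ≤ (y ⬝ᵥ G *ᵥ y) * (s * s) + 2 * (x ⬝ᵥ G *ᵥ y) * s + x ⬝ᵥ G *ᵥ x := by
    intro s
    have := hG.dotProduct_mulVec_nonneg (x + s • y)
    simp only [star_trivial, mulVec_add, mulVec_smul, dotProduct_add, add_dotProduct,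
      dotProduct_smul, smul_dotProduct, smul_eq_mul, hsymm] at this
    linarith
  have := discrim_le_zero hquad
  rw [discrim] at this
  nlinarith

theorem Matrix.PosDef.sq_dotProduct_self_le [DecidableEq ι] {G : Matrix ι ι ℝ} (hG : G.PosDef)
    (ν : ι → ℝ) : (ν ⬝ᵥ ν) ^ 2 ≤ (ν ⬝ᵥ G *ᵥ ν) * (ν ⬝ᵥ G⁻¹ *ᵥ ν) := by
  have hinv : G * G⁻¹ = 1 := mul_nonsing_inv G ((isUnit_iff_isUnit_det G).mp hG.isUnit)
  have hGm : G *ᵥ (G⁻¹ *ᵥ ν) = ν := by rw [mulVec_mulVec, hinv, one_mulVec]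
  have := hG.posSemidef.sq_dotProduct_mulVec_le ν (G⁻¹ *ᵥ ν)
  rwa [hGm, dotProduct_comm (G⁻¹ *ᵥ ν)] at this

theorem Matrix.PosDef.dotProduct_self_le [DecidableEq ι] {G : Matrix ι ι ℝ} (hG : G.PosDef)
    {c : ℝ} (hGinv : ∀ i j, |G⁻¹ i j - (1 : Matrix ι ι ℝ) i j| ≤ c) {ν : ι → ℝ}
    (hν : ν ⬝ᵥ G *ᵥ ν = 1) : ν ⬝ᵥ ν ≤ 1 + Fintype.card ι * c := by
  have hpos : 0 < ν ⬝ᵥ ν := by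
    refine lt_of_le_of_ne (dotProduct_self_star_nonneg ν) fun h => ?_
    rw [eq_comm, dotProduct_self_eq_zero] at h
    simp [h] at hν
  have := hG.sq_dotProduct_self_le ν
  rw [hν, one_mul] at this
  nlinarith [dotProduct_mulVec_self_le hGinv ν]

theorem Matrix.PosDef.abs_dotProduct_le_sqrt [DecidableEq ι] {G : Matrix ι ι ℝ} (hG : G.PosDef)
    {c : ℝ} (hGinv : ∀ i j, |G⁻¹ i j - (1 : Matrix ι ι ℝ) i j| ≤ c) {ν N : ι → ℝ}
    (hν : ν ⬝ᵥ G *ᵥ ν = 1) (hN : N ⬝ᵥ N = 1) : |ν ⬝ᵥ N| ≤ √(1 + Fintype.card ι * c) := by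
  have hcs := PosSemidef.one.sq_dotProduct_mulVec_le ν N
  rw [one_mulVec, one_mulVec, hN, mul_one] at hcs
  exact Real.abs_le_sqrt (hcs.trans (hG.dotProduct_self_le hGinv hν))

theorem abs_quadForms_dotProduct_le {T : ι → Matrix ι ι ℝ} {γ : ℝ}
    (hT : ∀ k a b, |T k a b| ≤ γ) {N : ι → ℝ} (hN : ∀ k, |N k| ≤ 1) (w : ι → ℝ) :
    |(fun k => w ⬝ᵥ T k *ᵥ w) ⬝ᵥ N| ≤ Fintype.card ι ^ 2 * γ * (w ⬝ᵥ w) := by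
  calc |(fun k => w ⬝ᵥ T k *ᵥ w) ⬝ᵥ N| ≤ ∑ k, |w ⬝ᵥ T k *ᵥ w| * |N k| := by
        simp only [dotProduct, ← abs_mul]; exact abs_sum_le_sum_abs _ _
    _ ≤ ∑ _k : ι, Fintype.card ι * γ * (w ⬝ᵥ w) * 1 := by
        refine sum_le_sum fun k _ => ?_
        have hk := abs_dotProduct_mulVec_self_le (hT k) w
        exact mul_le_mul hk (hN k) (abs_nonneg _) ((abs_nonneg _).trans hk)
    _ = Fintype.card ι ^ 2 * γ * (w ⬝ᵥ w) := by
        simp only [mul_one, sum_const, card_univ, nsmul_eq_mul]; ring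

theorem abs_le_one_of_dotProduct_self_eq_one {N : ι → ℝ}
    (hN : N ⬝ᵥ N = 1) (k : ι) : |N k| ≤ 1 := by
  rw [← sq_le_one_iff_abs_le_one, ← hN, sq]
  exact single_le_sum (f := fun i => N i * N i) (fun i _ => mul_self_nonneg (N i)) (mem_univ k)

end QuadraticForms

theorem dotProduct_eq_mul_of_normal {n : ℕ} {G : Matrix (Fin (n + 1)) (Fin (n + 1)) ℝ}
    {t : Fin n → Fin (n + 1) → ℝ} (ht : LinearIndependent ℝ t) {ν N : Fin (n + 1) → ℝ}
    (hν : ν ⬝ᵥ G *ᵥ ν = 1) (hνt : ∀ i, ν ⬝ᵥ G *ᵥ t i = 0) (hNt : ∀ i, N ⬝ᵥ t i = 0)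
    (W : Fin (n + 1) → ℝ) : W ⬝ᵥ N = (ν ⬝ᵥ G *ᵥ W) * (ν ⬝ᵥ N) := by
  have hν_notMem : ν ∉ Submodule.span ℝ (Set.range t) := by
    intro hmem
    obtain ⟨c, hc⟩ := (Submodule.mem_span_range_iff_exists_fun ℝ).1 hmem
    have : ν ⬝ᵥ G *ᵥ (∑ i, c i • t i) = 0 := by
      simp [mulVec_sum, dotProduct_sum, mulVec_smul, hνt]
    rw [hc, hν] at this
    exact one_ne_zero this
  have hli : LinearIndependent ℝ (Fin.snoc t ν : Fin (n + 1) → _) :=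
    linearIndependent_finSnoc.2 ⟨ht, hν_notMem⟩
  have hW : W ∈ Submodule.span ℝ (Set.range (Fin.snoc t ν : Fin (n + 1) → _)) := by
    rw [hli.span_eq_top_of_card_eq_finrank (by simp)]; exact Submodule.mem_top
  obtain ⟨c, rfl⟩ := (Submodule.mem_span_range_iff_exists_fun ℝ).1 hW
  simp only [Fin.sum_univ_castSucc, Fin.snoc_castSucc, Fin.snoc_last]
  simp [mulVec_add, mulVec_sum, mulVec_smul, dotProduct_sum, hνt, hν,
    dotProduct_comm _ N, hNt]

section Surfaces

variable (g : (Fin 3 → ℝ) → Matrix (Fin 3) (Fin 3) ℝ) (X : (Fin 2 → ℝ) → Fin 3 → ℝ)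

theorem ginner_eq_dotProduct_mulVec (x v w : Fin 3 → ℝ) : ginner g x v w = v ⬝ᵥ g x *ᵥ w := by
  simp only [ginner, dotProduct, mulVec, mul_sum]
  exact sum_congr rfl fun i _ => sum_congr rfl fun j _ => by ring

theorem ginner_euclMetric (x v w : Fin 3 → ℝ) : ginner euclMetric x v w = v ⬝ᵥ w := by
  rw [ginner_eq_dotProduct_mulVec, euclMetric, one_mulVec]

theorem christoffel_euclMetric (x : Fin 3 → ℝ) (k i j : Fin 3) :
    christoffel euclMetric x k i j = 0 := by
  simp [christoffel, euclMetric, pderiv3]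

theorem abs_christoffel_le {x : Fin 3 → ℝ} {c c' : ℝ}
    (hinv : ∀ k l, |(g x)⁻¹ k l - (1 : Matrix (Fin 3) (Fin 3) ℝ) k l| ≤ c)
    (hdg : ∀ i j k, |pderiv3 k (fun y => g y i j) x| ≤ c') (k a b : Fin 3) :
    |christoffel g x k a b| ≤ 9 / 2 * (1 + c) * c' := by
  have hinv_le : ∀ l, |(g x)⁻¹ k l| ≤ 1 + c := fun l => by
    have h1 : |(1 : Matrix (Fin 3) (Fin 3) ℝ) k l| ≤ 1 := by
      rw [one_apply]; split_ifs <;> simp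
    linarith [abs_sub_abs_le_abs_sub ((g x)⁻¹ k l) ((1 : Matrix (Fin 3) (Fin 3) ℝ) k l), hinv k l]
  have hdg_le : ∀ l, |pderiv3 a (fun y => g y b l) x + pderiv3 b (fun y => g y a l) x
      - pderiv3 l (fun y => g y a b) x| ≤ 3 * c' := fun l => by
    linarith [abs_sub (pderiv3 a (fun y => g y b l) x + pderiv3 b (fun y => g y a l) x)
      (pderiv3 l (fun y => g y a b) x), abs_add_le (pderiv3 a (fun y => g y b l) x)
      (pderiv3 b (fun y => g y a l) x), hdg b l a, hdg a l b, hdg a b l]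
  rw [christoffel, abs_mul, abs_of_pos (by norm_num : (0 : ℝ) < 1 / 2)]
  calc 1 / 2 * |∑ l, (g x)⁻¹ k l * _| ≤ 1 / 2 * ∑ _l : Fin 3, (1 + c) * (3 * c') := by
        gcongr
        refine (abs_sum_le_sum_abs _ _).trans (sum_le_sum fun l _ => ?_)
        rw [abs_mul]
        exact mul_le_mul (hinv_le l) (hdg_le l) (abs_nonneg _) ((abs_nonneg _).trans (hinv_le l))
    _ = 9 / 2 * (1 + c) * c' := by
        simp only [sum_const, card_univ, Fintype.card_fin, nsmul_eq_mul, Nat.cast_ofNat]; ring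

noncomputable def tangentVecDir (v u : Fin 2 → ℝ) : Fin 3 → ℝ :=
  ∑ i, v i • tangentVec X i u

noncomputable def sffVecDir (v u : Fin 2 → ℝ) : Fin 3 → ℝ :=
  ∑ i, ∑ j, (v i * v j) • sffVec g X i j u

theorem sum_fff_eq_ginner (u v : Fin 2 → ℝ) :
    ∑ i, ∑ j, v i * v j * fff g X i j u
      = ginner g (X u) (tangentVecDir X v u) (tangentVecDir X v u) := by
  simp only [fff, ginner, tangentVecDir, Fin.sum_univ_two, Fin.sum_univ_three, Pi.add_apply,
    Pi.smul_apply, smul_eq_mul]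
  ring

theorem sum_sff_eq_ginner (n : (Fin 2 → ℝ) → Fin 3 → ℝ) (u v : Fin 2 → ℝ) :
    ∑ i, ∑ j, v i * v j * sff g X n i j u = ginner g (X u) (sffVecDir g X v u) (n u) := by
  simp only [sff, ginner, sffVecDir, Fin.sum_univ_two, Fin.sum_univ_three, Pi.add_apply,
    Pi.smul_apply, smul_eq_mul]
  ring

theorem sffVecDir_euclMetric (u v : Fin 2 → ℝ) :
    sffVecDir euclMetric X v u = sffVecDir g X v u
      - fun k => tangentVecDir X v u ⬝ᵥ christoffel g (X u) k *ᵥ tangentVecDir X v u := by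
  funext k
  simp only [sffVecDir, sffVec, christoffel_euclMetric, tangentVecDir, dotProduct, mulVec,
    Fin.sum_univ_two, Fin.sum_univ_three, Pi.add_apply, Pi.sub_apply, Pi.smul_apply, smul_eq_mul]
  ring

theorem abs_dotProduct_mulVec_sffVecDir_le {n : (Fin 2 → ℝ) → Fin 3 → ℝ} {u : Fin 2 → ℝ}
    {C : ℝ} (hsym : (g (X u)).IsSymm) (hII : ∀ v : Fin 2 → ℝ,
      |∑ i, ∑ j, v i * v j * sff g X n i j u| ≤ C * ∑ i, ∑ j, v i * v j * fff g X i j u)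
    (v : Fin 2 → ℝ) :
    |n u ⬝ᵥ g (X u) *ᵥ sffVecDir g X v u|
      ≤ C * (tangentVecDir X v u ⬝ᵥ g (X u) *ᵥ tangentVecDir X v u) := by
  have := hII v
  rwa [sum_sff_eq_ginner, sum_fff_eq_ginner, ginner_eq_dotProduct_mulVec,
    ginner_eq_dotProduct_mulVec, hsym.dotProduct_mulVec_comm (n u)] at this

end Surfaces

/-- Appendix Proposition: if `g` is a `C¹` metric on an open set `U ⊆ ℝ³` with
`|g_{ij} - δ_{ij}|_{C¹(U)} < C₂` and `|g^{ij} - δ_{ij}|_{C⁰(U)} < C₂`, and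
`S = X(D)` is an immersed `C²` surface without boundary in `U` whose second
fundamental form w.r.t. `g` satisfies `|Ā| < C₁` (i.e.
`|II(v,v)| ≤ C₁ · I(v,v)` for all tangent directions `v`, for every choice of
`g`-unit normal `n`), then there is `C₃ > 0` depending only on `C₁, C₂` (not
on `S`) such that the Euclidean second fundamental form of `S` satisfies
`|A| < C₃`, i.e. `|II_euc(v,v)| ≤ C₃ · I_euc(v,v)`. -/
theorem sff_comparison (C₁ C₂ : ℝ) (hC₁ : 0 < C₁) (hC₂ : 0 < C₂) :
    ∃ C₃ > (0:ℝ), ∀ (U : Set (Fin 3 → ℝ)), IsOpen U →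
      ∀ g : (Fin 3 → ℝ) → Matrix (Fin 3) (Fin 3) ℝ,
      -- g is a C¹ Riemannian metric on U
      (∀ i j : Fin 3, ContDiffOn ℝ 1 (fun y => g y i j) U) →
      (∀ x ∈ U, (g x).PosDef) → (∀ x ∈ U, (g x).IsSymm) →
      -- C⁰ and C¹ closeness of g to the Euclidean metric, and C⁰ closeness
      -- of the inverse metric
      (∀ x ∈ U, ∀ i j : Fin 3,
        |g x i j - (1 : Matrix (Fin 3) (Fin 3) ℝ) i j| < C₂ ∧
        (∀ k : Fin 3, |pderiv3 k (fun y => g y i j) x| < C₂) ∧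
        |(g x)⁻¹ i j - (1 : Matrix (Fin 3) (Fin 3) ℝ) i j| < C₂) →
      ∀ (D : Set (Fin 2 → ℝ)), IsOpen D →
      ∀ X : (Fin 2 → ℝ) → Fin 3 → ℝ,
      -- X is a C² immersion of D into U
      ContDiffOn ℝ 2 X D → (∀ u ∈ D, X u ∈ U) →
      (∀ u ∈ D, LinearIndependent ℝ ![tangentVec X 0 u, tangentVec X 1 u]) →
      -- n is a g-unit normal field along X, nE a Euclidean unit normal field
      ∀ n nE : (Fin 2 → ℝ) → Fin 3 → ℝ,
      (∀ u ∈ D, ginner g (X u) (n u) (n u) = 1 ∧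
        ∀ i : Fin 2, ginner g (X u) (n u) (tangentVec X i u) = 0) →
      (∀ u ∈ D, ginner euclMetric (X u) (nE u) (nE u) = 1 ∧
        ∀ i : Fin 2, ginner euclMetric (X u) (nE u) (tangentVec X i u) = 0) →
      -- the second fundamental form w.r.t. g is bounded by C₁
      (∀ u ∈ D, ∀ v : Fin 2 → ℝ,
        |∑ i : Fin 2, ∑ j : Fin 2, v i * v j * sff g X n i j u|
          ≤ C₁ * ∑ i : Fin 2, ∑ j : Fin 2, v i * v j * fff g X i j u) →
      -- conclusion: the Euclidean second fundamental form is bounded by C₃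
      ∀ u ∈ D, ∀ v : Fin 2 → ℝ,
        |∑ i : Fin 2, ∑ j : Fin 2, v i * v j * sff euclMetric X nE i j u|
          ≤ C₃ * ∑ i : Fin 2, ∑ j : Fin 2, v i * v j * fff euclMetric X i j u := by
  refine ⟨C₁ * (1 + 3 * C₂) * √(1 + 3 * C₂) + 81 / 2 * (1 + C₂) * C₂, by positivity, ?_⟩
  intro U _ g _ hpos hsym hclose D _ X _ hXU himm n nE hn hnE hA u hu v
  obtain ⟨hn₁, hnt⟩ := hn u hu
  obtain ⟨hN₁, hNt⟩ := hnE u hu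
  simp only [ginner_euclMetric] at hN₁ hNt
  simp only [ginner_eq_dotProduct_mulVec] at hn₁ hnt
  have hcl := hclose _ (hXU u hu)
  set w := tangentVecDir X v u
  set W := sffVecDir g X v u
  have hW : W ⬝ᵥ nE u = (n u ⬝ᵥ g (X u) *ᵥ W) * (n u ⬝ᵥ nE u) :=
    dotProduct_eq_mul_of_normal (t := fun i => tangentVec X i u)
      (by convert himm u hu using 1; ext i : 1; fin_cases i <;> rfl) hn₁ hnt hNt W
  have hνN := (hpos _ (hXU u hu)).abs_dotProduct_le_sqrt (fun i j => (hcl i j).2.2.le) hn₁ hN₁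
  have hgw := dotProduct_mulVec_self_le (fun i j => (hcl i j).1.le) w
  have hΓ := abs_quadForms_dotProduct_le
    (abs_christoffel_le g (fun k l => (hcl k l).2.2.le) (fun i j k => ((hcl i j).2.1 k).le))
    (abs_le_one_of_dotProduct_self_eq_one hN₁) w
  simp only [Fintype.card_fin, Nat.cast_ofNat] at hνN hgw hΓ
  have hII := (abs_dotProduct_mulVec_sffVecDir_le g X (hsym _ (hXU u hu)) (hA u hu) v).trans
    (mul_le_mul_of_nonneg_left hgw hC₁.le)
  rw [sum_sff_eq_ginner, sum_fff_eq_ginner, ginner_euclMetric, ginner_euclMetric,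
    sffVecDir_euclMetric g, sub_dotProduct, hW]
  calc _ ≤ |(n u ⬝ᵥ g (X u) *ᵥ W) * (n u ⬝ᵥ nE u)| + |_| := abs_sub _ _
    _ ≤ C₁ * ((1 + 3 * C₂) * (w ⬝ᵥ w)) * √(1 + 3 * C₂)
        + 3 ^ 2 * (9 / 2 * (1 + C₂) * C₂) * (w ⬝ᵥ w) := by
      rw [abs_mul]
      exact add_le_add (mul_le_mul hII hνN (abs_nonneg _) ((abs_nonneg _).trans hII)) hΓ
    _ = _ := by ring
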